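/- Let h(z) = (1+z)ln(1+z) - z on (-1,∞), fix z₀ > -1, and define l(y) = h(z₀ + y) - h(z₀) - h'(z₀)y for z₀ + y > -1. Then the convex conjugate of l satisfies l*(p) = (1+z₀)(e^p - p - 1) for all real p. -/
import Mathlib


/-- Convex conjugate of the shifted entropy function:
`l(y) = h(z₀+y) - h(z₀) - h'(z₀)y` has conjugate `l*(p) = (1+z₀)(e^p - p - 1)`,
where `h(z) = (1+z)log(1+z) - z` and `h'(z₀) = log(1+z₀)`. -/
theorem legendre_transform_shifted_entropy (z₀ : ℝ) (hz₀ : -1 < z₀) (p : ℝ) :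
    IsLUB {s : ℝ | ∃ y : ℝ, -1 - z₀ < y ∧
        s = p * y -
          (((1 + (z₀ + y)) * Real.log (1 + (z₀ + y)) - (z₀ + y))
            - ((1 + z₀) * Real.log (1 + z₀) - z₀)
            - Real.log (1 + z₀) * y)}
      ((1 + z₀) * (Real.exp p - p - 1)) := by
  set a := 1 + z₀ with ha
  have ha0 : 0 < a := by simp only [ha]; linarith
  apply IsGreatest.isLUB
  constructor
  · refine ⟨a * (Real.exp p - 1), by nlinarith [Real.exp_pos p], ?_⟩
    have h1 : 1 + (z₀ + a * (Real.exp p - 1)) = a * Real.exp p := by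
      simp only [ha]; ring
    rw [h1, Real.log_mul (ne_of_gt ha0) (ne_of_gt (Real.exp_pos p)), Real.log_exp]
    ring
  · rintro s ⟨y, hy, rfl⟩
    have ht : (0:ℝ) < 1 + (z₀ + y) := by linarith
    set t := 1 + (z₀ + y) with htdef
    have hy' : y = t - a := by simp only [htdef, ha]; ring
    have key : t * (p + Real.log a - Real.log t) + t ≤ a * Real.exp p := by
      have h2 : (p + Real.log a - Real.log t) + 1 ≤ Real.exp (p + Real.log a - Real.log t) :=
        Real.add_one_le_exp _
      have h3 : Real.exp (p + Real.log a - Real.log t) = a * Real.exp p / t := by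
        rw [Real.exp_sub, Real.exp_add, Real.exp_log ha0, Real.exp_log ht]; ring
      calc t * (p + Real.log a - Real.log t) + t
          = t * ((p + Real.log a - Real.log t) + 1) := by ring
        _ ≤ t * (a * Real.exp p / t) :=
            mul_le_mul_of_nonneg_left (h3 ▸ h2) ht.le
        _ = a * Real.exp p := by field_simp
    rw [hy']
    nlinarith [key]
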